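/- arXiv:1212.0912 — 6 statements merged into one kernel-verified Lean document; each statement's English description precedes it below -/
import Mathlib

section
/- Let g : ℝⁿ × ℝᵐ → ℝ be differentiable, let ᾱ : ℝⁿ → ℝᵐ be differentiable with D_α g(x, ᾱ(x)) = 0 for every x, let g̃(x) = g(x, ᾱ(x)), and let X ⊆ ℝⁿ be a convex set. If x̄ ∈ X is a stationary point of g̃ over X, meaning D g̃(x̄)(x − x̄) ≥ 0 for all x ∈ X, then (x̄, ᾱ(x̄)) is a stationary point of g over X × ℝᵐ, meaning D g(x̄, ᾱ(x̄))((x, α) − (x̄, ᾱ(x̄))) ≥ 0 for all x ∈ X and all α ∈ ℝᵐ. -/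
/-!
Envelope argument: since `g` is critical in `α` along the graph of `ᾱ`, the chain rule gives
`D g̃(x̄) = D_x g(x̄, ᾱ(x̄))`, and for the same reason the `α`-component of a direction
`(x - x̄, α - ᾱ(x̄))` does not contribute to `D g(x̄, ᾱ(x̄))`. Both sides of the required
inequality are therefore `D g̃(x̄)(x - x̄)`.
-/

open ContinuousLinearMap

theorem ContinuousLinearMap.apply_eq_comp_inl_of_comp_inr_eq_zero {R M₁ M₂ M₃ : Type*}
    [Semiring R] [TopologicalSpace M₁] [TopologicalSpace M₂] [TopologicalSpace M₃]
    [AddCommMonoid M₁] [AddCommMonoid M₂] [AddCommMonoid M₃]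
    [Module R M₁] [Module R M₂] [Module R M₃]
    (L : M₁ × M₂ →L[R] M₃) (h : L.comp (inr R M₁ M₂) = 0) (v : M₁ × M₂) :
    L v = L.comp (inl R M₁ M₂) v.1 := by
  rw [← L.comp_inl_add_comp_inr v, h, zero_apply, add_zero]

theorem HasFDerivAt.comp_prodMk_of_comp_inr_eq_zero {𝕜 E F G : Type*}
    [NontriviallyNormedField 𝕜] [NormedAddCommGroup E] [NormedSpace 𝕜 E]
    [NormedAddCommGroup F] [NormedSpace 𝕜 F] [NormedAddCommGroup G] [NormedSpace 𝕜 G]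
    {g : E × F → G} {g' : E × F →L[𝕜] G} {a : E → F} {a' : E →L[𝕜] F} {x : E}
    (hg : HasFDerivAt g g' (x, a x)) (ha : HasFDerivAt a a' x)
    (hcrit : g'.comp (inr 𝕜 E F) = 0) :
    HasFDerivAt (fun y => g (y, a y)) (g'.comp (inl 𝕜 E F)) x :=
  (hg.comp x ((hasFDerivAt_id x).prodMk ha)).congr_fderiv <|
    ext fun v => g'.apply_eq_comp_inl_of_comp_inr_eq_zero hcrit (v, a' v)

theorem variable_projection_stationary_general (n m : ℕ)
    (g : EuclideanSpace ℝ (Fin n) × EuclideanSpace ℝ (Fin m) → ℝ)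
    (αbar : EuclideanSpace ℝ (Fin n) → EuclideanSpace ℝ (Fin m))
    (hg : Differentiable ℝ g) (hαbar : Differentiable ℝ αbar)
    (hcrit : ∀ x, (fderiv ℝ g (x, αbar x)).comp
      (ContinuousLinearMap.inr ℝ (EuclideanSpace ℝ (Fin n)) (EuclideanSpace ℝ (Fin m))) = 0)
    (gtilde : EuclideanSpace ℝ (Fin n) → ℝ)
    (hgtilde : ∀ x, gtilde x = g (x, αbar x))
    (X : Set (EuclideanSpace ℝ (Fin n)))
    (xb : EuclideanSpace ℝ (Fin n))
    (hstat : ∀ x ∈ X, 0 ≤ fderiv ℝ gtilde xb (x - xb)) :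
    ∀ x ∈ X, ∀ α : EuclideanSpace ℝ (Fin m),
      0 ≤ fderiv ℝ g (xb, αbar xb) ((x, α) - (xb, αbar xb)) := by
  intro x hx α
  have hreduced : fderiv ℝ gtilde xb = (fderiv ℝ g (xb, αbar xb)).comp (inl ℝ _ _) := by
    rw [funext hgtilde]
    exact ((hg _).hasFDerivAt.comp_prodMk_of_comp_inr_eq_zero
      (hαbar xb).hasFDerivAt (hcrit xb)).fderiv
  rw [apply_eq_comp_inl_of_comp_inr_eq_zero _ (hcrit xb), ← hreduced]
  exact hstat x hx

/-- If `x̄` is a stationary point of the reduced objective `gtilde x = g (x, αbar x)`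
over a convex set `X`, then `(x̄, αbar x̄)` is a stationary point of `g` over `X × ℝᵐ`. -/
theorem variable_projection_stationary (n m : ℕ)
    (g : EuclideanSpace ℝ (Fin n) × EuclideanSpace ℝ (Fin m) → ℝ)
    (αbar : EuclideanSpace ℝ (Fin n) → EuclideanSpace ℝ (Fin m))
    (hg : Differentiable ℝ g) (hαbar : Differentiable ℝ αbar)
    (hcrit : ∀ x, (fderiv ℝ g (x, αbar x)).comp
      (ContinuousLinearMap.inr ℝ (EuclideanSpace ℝ (Fin n)) (EuclideanSpace ℝ (Fin m))) = 0)
    (gtilde : EuclideanSpace ℝ (Fin n) → ℝ)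
    (hgtilde : ∀ x, gtilde x = g (x, αbar x))
    (X : Set (EuclideanSpace ℝ (Fin n))) (hX : Convex ℝ X)
    (xb : EuclideanSpace ℝ (Fin n)) (hxb : xb ∈ X)
    (hstat : ∀ x ∈ X, 0 ≤ fderiv ℝ gtilde xb (x - xb)) :
    ∀ x ∈ X, ∀ α : EuclideanSpace ℝ (Fin m),
      0 ≤ fderiv ℝ g (xb, αbar xb) ((x, α) - (xb, αbar xb)) :=
  variable_projection_stationary_general n m g αbar hg hαbar hcrit gtilde hgtilde X xb hstat
end

section
/- For i = 1, …, k let A_i : ℝⁿ → ℝ^{m} be linear maps and d_i ∈ ℝ^{m}, let ᾱ_i(x) = ⟨A_i x, d_i⟩ / ‖A_i x‖², and let g̃(x) = Σ_{i=1}^k ‖d_i − ᾱ_i(x) A_i x‖². Then at every x ∈ ℝⁿ with A_i x ≠ 0 for all i, g̃ is differentiable and its gradient equals the gradient of the fixed-weight objective x ↦ Σ_{i=1}^k ‖d_i − c_i A_i x‖² evaluated with the constants c_i = ᾱ_i(x); explicitly, ∇g̃(x) = −2 Σ_{i=1}^k ᾱ_i(x) A_iᵀ ( d_i − ᾱ_i(x)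 A_i x ). -/
/-!
Each summand is `φ ∘ Aᵢ` with `φ u = ‖d - ᾱ(u) • u‖²`, so it suffices to compute gradients on the
target space and pull them back by adjoints. Since `ᾱ(u) • u` is the orthogonal projection of `d`
onto `ℝ u`, Pythagoras gives `φ u = ‖d‖² - ⟪u, d⟫² / ‖u‖²`, whose gradient
`-2 ⟪u, d⟫ / ‖u‖² • d + 2 ⟪u, d⟫² / ‖u‖⁴ • u = -2 ᾱ • (d - ᾱ • u)` is that of `v ↦ ‖d - c • v‖²`
at `c = ᾱ(u)`: the weight is optimal, so its variation does not contribute to first order.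
-/

open InnerProductSpace ContinuousLinearMap
open scoped RealInnerProductSpace

section
variable {E F : Type*} [NormedAddCommGroup E] [InnerProductSpace ℝ E] [CompleteSpace E]
  [NormedAddCommGroup F] [InnerProductSpace ℝ F] [CompleteSpace F]

theorem HasFDerivAt.hasGradientAt_of_apply_eq_inner {f : E → ℝ} {f' : E →L[ℝ] ℝ} {g x : E}
    (hf : HasFDerivAt f f' x) (hg : ∀ v, f' v = ⟪g, v⟫) : HasGradientAt f g x := by
  rwa [hasGradientAt_iff_hasFDerivAt, show toDual ℝ E g = f' from ext fun v => (hg v).symm]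

theorem HasGradientAt.fun_sum {ι : Type*} {s : Finset ι} {f : ι → E → ℝ} {g : ι → E} {x : E}
    (h : ∀ i ∈ s, HasGradientAt (f i) (g i) x) :
    HasGradientAt (fun y => ∑ i ∈ s, f i y) (∑ i ∈ s, g i) x := by
  rw [hasGradientAt_iff_hasFDerivAt, map_sum]
  exact HasFDerivAt.fun_sum fun i hi => (h i hi).hasFDerivAt

theorem HasGradientAt.comp_continuousLinearMap {φ : F → ℝ} {g : F} (A : E →L[ℝ] F) {x : E}
    (hφ : HasGradientAt φ g (A x)) : HasGradientAt (fun y => φ (A y)) (adjoint A g) x :=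
  (hφ.hasFDerivAt.comp x A.hasFDerivAt).hasGradientAt_of_apply_eq_inner fun v => by
    simp [adjoint_inner_left]

end

section
variable {F : Type*} [NormedAddCommGroup F] [InnerProductSpace ℝ F]

noncomputable def optimalWeight (u d : F) : ℝ := ⟪u, d⟫ / ‖u‖ ^ 2

theorem norm_sub_optimalWeight_smul_sq (u d : F) :
    ‖d - optimalWeight u d • u‖ ^ 2 = ‖d‖ ^ 2 - ⟪u, d⟫ ^ 2 / ‖u‖ ^ 2 := by
  rcases eq_or_ne u 0 with rfl | hu
  · simp
  have hu2 : ‖u‖ ^ 2 ≠ 0 := by positivity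
  rw [optimalWeight, norm_sub_sq_real, inner_smul_right, norm_smul, mul_pow, Real.norm_eq_abs,
    sq_abs, real_inner_comm d u]
  field_simp
  ring

variable [CompleteSpace F]

theorem hasGradientAt_norm_sub_smul_sq (d : F) (c : ℝ) (u : F) :
    HasGradientAt (fun v => ‖d - c • v‖ ^ 2) ((-2 * c) • (d - c • u)) u := by
  have h := (((hasFDerivAt_id u).const_smul c).const_sub d).norm_sq
  refine h.hasGradientAt_of_apply_eq_inner fun v => ?_
  simp only [Pi.smul_apply, id_eq, map_sub, map_smul, comp_neg, comp_smulₛₗ, Real.ringHom_apply,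
    comp_id, smul_neg, neg_apply, smul_apply, sub_apply, coe_innerSL_apply, smul_eq_mul,
    nsmul_eq_mul, Nat.cast_ofNat, neg_mul, neg_smul, inner_neg_left, inner_smul_left,
    real_inner_comm, inner_sub_right, inner_smul_right, neg_inj]
  ring

theorem hasGradientAt_norm_sub_optimalWeight_smul_sq (d : F) {u : F} (hu : u ≠ 0) :
    HasGradientAt (fun v => ‖d - optimalWeight v d • v‖ ^ 2)
      ((-2 * optimalWeight u d) • (d - optimalWeight u d • u)) u := by
  have hu2 : ‖u‖ ^ 2 ≠ 0 := by positivity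
  have hnum := ((innerSL ℝ d).hasFDerivAt (x := u)).pow 2
  have hden := (hasDerivAt_inv hu2).comp_hasFDerivAt u (hasStrictFDerivAt_norm_sq u).hasFDerivAt
  have h := (hnum.mul hden).const_sub (‖d‖ ^ 2)
  simp_rw [norm_sub_optimalWeight_smul_sq, div_eq_mul_inv, real_inner_comm d]
  refine h.hasGradientAt_of_apply_eq_inner fun v => ?_
  simp only [coe_innerSL_apply, neg_smul, smul_neg, Function.comp_apply, Nat.add_one_sub_one,
    pow_one, nsmul_eq_mul, Nat.cast_ofNat, neg_add_rev, neg_neg, add_apply, neg_apply, smul_apply,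
    smul_eq_mul, optimalWeight, real_inner_comm, neg_mul, inner_neg_left, inner_smul_left,
    Real.ringHom_apply, inner_sub_left, map_div₀]
  field_simp
  ring

end

/-- Gradient of the variable-projection objective
`gtilde x = Σ_i ‖d_i − αbar_i(x) • A_i x‖²` with `αbar_i(x) = ⟨A_i x, d_i⟩ / ‖A_i x‖²`:
at any `x` with `A_i x ≠ 0` for all `i`, `gtilde` is differentiable with gradient
`G = −2 Σ_i αbar_i(x) Aᵢᵀ (d_i − αbar_i(x) A_i x)`, which is also the gradient at `x` of
the fixed-weight objective `y ↦ Σ_i ‖d_i − c_i • A_i y‖²` with `c_i = αbar_i(x)`. -/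
theorem variable_projection_gradient_formula (n m k : ℕ)
    (A : Fin k → (EuclideanSpace ℝ (Fin n) →L[ℝ] EuclideanSpace ℝ (Fin m)))
    (d : Fin k → EuclideanSpace ℝ (Fin m))
    (αbar : EuclideanSpace ℝ (Fin n) → Fin k → ℝ)
    (hαbar : ∀ x i, αbar x i = (inner ℝ (A i x) (d i) : ℝ) / ‖A i x‖ ^ 2)
    (gtilde : EuclideanSpace ℝ (Fin n) → ℝ)
    (hgtilde : ∀ x, gtilde x = ∑ i, ‖d i - αbar x i • A i x‖ ^ 2)
    (x : EuclideanSpace ℝ (Fin n)) (hx : ∀ i, A i x ≠ 0)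
    (G : EuclideanSpace ℝ (Fin n))
    (hG : G = (-2 : ℝ) • ∑ i, αbar x i •
      (ContinuousLinearMap.adjoint (A i)) (d i - αbar x i • A i x)) :
    HasGradientAt gtilde G x ∧
      HasGradientAt (fun y => ∑ i, ‖d i - αbar x i • A i y‖ ^ 2) G x := by
  have hαbar' : ∀ y, αbar y = fun i => optimalWeight (A i y) (d i) := fun y => funext (hαbar y)
  have hG' : G = ∑ i, adjoint (A i) ((-2 * αbar x i) • (d i - αbar x i • A i x)) := by
    simp only [hG, Finset.smul_sum, map_smul, smul_smul]
  rw [show gtilde = _ from funext hgtilde, hG']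
  simp only [hαbar']
  constructor <;> refine HasGradientAt.fun_sum fun i _ => ?_
  · exact (hasGradientAt_norm_sub_optimalWeight_smul_sq (d i) (hx i)).comp_continuousLinearMap
      (A i)
  · exact (hasGradientAt_norm_sub_smul_sq (d i) _ (A i x)).comp_continuousLinearMap (A i)
end

section
/- Let f : ℝⁿ → ℝ be a function, σ ≥ 0, and define the value function v(τ) = inf { f(x) : ‖x‖₁ ≤ τ }. Suppose that every global minimizer of the problem (P_σ): minimize ‖x‖₁ subject to f(x) ≤ σ² satisfies f(x) = σ². Then every global minimizer x̄ of (P_σ) is a global minimizer of the problem (L_{τ̄}): minimize f(x) subject to ‖x‖₁ ≤ τ̄, where τ̄ = ‖x̄‖₁, and moreover v(τ̄) = σ². -/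
/-- If every global minimizer of (P_σ): `min ‖x‖₁ s.t. f x ≤ σ²` satisfies `f x = σ²`,
then every global minimizer `x̄` of (P_σ) is a global minimizer of the LASSO problem
(L_τ̄): `min f x s.t. ‖x‖₁ ≤ τ̄` with `τ̄ = ‖x̄‖₁`, and the LASSO optimal value is
`v τ̄ = σ²`. -/
theorem bpdn_minimizer_solves_lasso (n : ℕ)
    (f : EuclideanSpace ℝ (Fin n) → ℝ) (σ : ℝ) (hσ : 0 ≤ σ)
    (hall : ∀ x : EuclideanSpace ℝ (Fin n),
      (f x ≤ σ ^ 2 ∧ ∀ y, f y ≤ σ ^ 2 → (∑ j, |x j|) ≤ ∑ j, |y j|) → f x = σ ^ 2)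
    (xb : EuclideanSpace ℝ (Fin n))
    (hxb : f xb ≤ σ ^ 2 ∧ ∀ y, f y ≤ σ ^ 2 → (∑ j, |xb j|) ≤ ∑ j, |y j|) :
    (∀ y : EuclideanSpace ℝ (Fin n), (∑ j, |y j|) ≤ (∑ j, |xb j|) → f xb ≤ f y) ∧
      sInf {r : ℝ | ∃ x : EuclideanSpace ℝ (Fin n),
        (∑ j, |x j|) ≤ (∑ j, |xb j|) ∧ r = f x} = σ ^ 2 := by
  have hfxb : f xb = σ ^ 2 := hall xb hxb
  have hmain : ∀ y : EuclideanSpace ℝ (Fin n),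
      (∑ j, |y j|) ≤ (∑ j, |xb j|) → f xb ≤ f y := by
    intro y hy
    by_cases hfy : f y ≤ σ ^ 2
    · have hy' : f y = σ ^ 2 := by
        apply hall y
        refine ⟨hfy, fun z hz => ?_⟩
        exact le_trans hy (hxb.2 z hz)
      rw [hfxb, hy']
    · rw [hfxb]; linarith [not_le.mp hfy]
  refine ⟨hmain, ?_⟩
  apply le_antisymm
  · have hmem : σ ^ 2 ∈ {r : ℝ | ∃ x : EuclideanSpace ℝ (Fin n),
        (∑ j, |x j|) ≤ (∑ j, |xb j|) ∧ r = f x} := ⟨xb, le_refl _, hfxb.symm⟩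
    apply csInf_le _ hmem
    refine ⟨σ ^ 2, fun r hr => ?_⟩
    obtain ⟨x, hx, rfl⟩ := hr
    rw [← hfxb]; exact hmain x hx
  · refine le_csInf ⟨σ ^ 2, xb, le_refl _, hfxb.symm⟩ ?_
    rintro r ⟨x, hx, rfl⟩
    rw [← hfxb]; exact hmain x hx
end

section
/- Let f : ℝⁿ → ℝ be a function, σ ≥ 0, and define the value function v(τ) = inf { f(x) : ‖x‖₁ ≤ τ }. Suppose that every global minimizer of the problem (P_σ): minimize ‖x‖₁ subject to f(x) ≤ σ² satisfies f(x) = σ², and that x̄ is a global minimizer of (P_σ) with τ̄ = ‖x̄‖₁. Then every global minimizer x′ of the problem (L_{τ̄}): minimize f(x) subject to ‖x‖₁ ≤ τ̄ satisfies f(x′) = σ² and ‖x′‖₁ = τ̄, and x′ is a global minimizer of (P_σ). Consequently the sets of global minimizers of (P_σ) and (L_{τ̄}) coincide. -/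
/-- Suppose every global minimizer of (P_σ): `min ‖x‖₁ s.t. f x ≤ σ²` satisfies
`f x = σ²`, and let `xb` be a global minimizer of (P_σ) with `τ̄ = ‖xb‖₁`. Then every
global minimizer `x'` of (L_τ̄): `min f x s.t. ‖x‖₁ ≤ τ̄` satisfies `f x' = σ²` and
`‖x'‖₁ = τ̄` and is a global minimizer of (P_σ); consequently the sets of global
minimizers of (P_σ) and (L_τ̄) coincide. -/
theorem bpdn_lasso_minimizers_coincide (n : ℕ)
    (f : EuclideanSpace ℝ (Fin n) → ℝ) (σ : ℝ) (hσ : 0 ≤ σ)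
    (hall : ∀ x : EuclideanSpace ℝ (Fin n),
      (f x ≤ σ ^ 2 ∧ ∀ y, f y ≤ σ ^ 2 → (∑ j, |x j|) ≤ ∑ j, |y j|) → f x = σ ^ 2)
    (xb : EuclideanSpace ℝ (Fin n))
    (hxb : f xb ≤ σ ^ 2 ∧ ∀ y, f y ≤ σ ^ 2 → (∑ j, |xb j|) ≤ ∑ j, |y j|)
    (τb : ℝ) (hτb : τb = ∑ j, |xb j|) :
    (∀ x' : EuclideanSpace ℝ (Fin n),
      ((∑ j, |x' j|) ≤ τb ∧ ∀ y, (∑ j, |y j|) ≤ τb → f x' ≤ f y) →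
        f x' = σ ^ 2 ∧ (∑ j, |x' j|) = τb ∧
          (f x' ≤ σ ^ 2 ∧ ∀ y, f y ≤ σ ^ 2 → (∑ j, |x' j|) ≤ ∑ j, |y j|)) ∧
    {x : EuclideanSpace ℝ (Fin n) |
        f x ≤ σ ^ 2 ∧ ∀ y, f y ≤ σ ^ 2 → (∑ j, |x j|) ≤ ∑ j, |y j|} =
      {x : EuclideanSpace ℝ (Fin n) |
        (∑ j, |x j|) ≤ τb ∧ ∀ y, (∑ j, |y j|) ≤ τb → f x ≤ f y} := by

  have hfxb : f xb = σ ^ 2 := hall xb hxb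
  -- key: every L-minimizer is a P-minimizer
  have key : ∀ x' : EuclideanSpace ℝ (Fin n),
      ((∑ j, |x' j|) ≤ τb ∧ ∀ y, (∑ j, |y j|) ≤ τb → f x' ≤ f y) →
        f x' = σ ^ 2 ∧ (∑ j, |x' j|) = τb ∧
          (f x' ≤ σ ^ 2 ∧ ∀ y, f y ≤ σ ^ 2 → (∑ j, |x' j|) ≤ ∑ j, |y j|) := by
    intro x' ⟨h1, h2⟩
    have hle : f x' ≤ σ ^ 2 := by
      have := h2 xb (le_of_eq hτb.symm)
      linarith [hfxb]
    have hnorm : (∑ j, |x' j|) = τb := by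
      have := hxb.2 x' hle
      linarith [hτb ▸ this]
    have hmin : ∀ y, f y ≤ σ ^ 2 → (∑ j, |x' j|) ≤ ∑ j, |y j| := by
      intro y hy
      have := hxb.2 y hy
      linarith [hτb ▸ this, hnorm]
    exact ⟨hall x' ⟨hle, hmin⟩, hnorm, hle, hmin⟩
  refine ⟨key, Set.eq_of_subset_of_subset ?_ ?_⟩
  · intro x hx
    have hfx : f x = σ ^ 2 := hall x hx
    have hxle : (∑ j, |x j|) ≤ τb := hτb ▸ hx.2 xb hxb.1
    refine ⟨hxle, fun y hy => ?_⟩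
    by_cases hfy : f y ≤ σ ^ 2
    · -- y is P-feasible with norm ≤ τb, hence a P-minimizer, so f y = σ²
      have hymin : ∀ z, f z ≤ σ ^ 2 → (∑ j, |y j|) ≤ ∑ j, |z j| := by
        intro z hz
        have := hxb.2 z hz
        linarith [hτb ▸ this]
      have := hall y ⟨hfy, hymin⟩
      linarith [hfx]
    · linarith [hfx]
  · intro x hx
    exact (key x hx).2.2
end

section
/- Let A : ℝⁿ → ℝᵐ be a linear map, b ∈ ℝᵐ, τ ≥ 0, and let x̄ be a global minimizer of h(x) = ‖b − A x‖² over the ℓ¹ ball {x : ‖x‖₁ ≤ τ}. Set r̄ = b − A x̄. Then ⟨Aᵀ r̄, x̄⟩ = τ · ‖Aᵀ r̄‖_∞. -/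
/-! The first-order optimality condition of the constrained least-squares problem says that
`x̄` maximizes the linear functional `⟪Aᵀ r̄, ·⟫` over the ℓ¹ ball (the gradient of
`‖b - A x‖²` at `x̄` is `-2 Aᵀ r̄`). The maximum of `⟪c, ·⟫` over the ℓ¹ ball of radius `τ` is
`τ ‖c‖_∞`: Hölder's inequality bounds it, and `τ · sign(c_j) e_j` at a largest coordinate
`|c_j|` attains it. -/

open Finset RealInnerProductSpace

section LeastSquares

variable {E F : Type*} [NormedAddCommGroup E] [NormedAddCommGroup F] [InnerProductSpace ℝ F]

theorem inner_residual_apply_sub_nonpos_of_isMinOn [NormedSpace ℝ E] {A : E →L[ℝ] F} {b : F}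
    {s : Set E} (hs : Convex ℝ s) {x₀ x : E}
    (hmin : IsMinOn (fun x ↦ ‖b - A x‖ ^ 2) s x₀) (hx₀ : x₀ ∈ s) (hx : x ∈ s) :
    ⟪b - A x₀, A (x - x₀)⟫ ≤ 0 := by
  have hderiv := ((hasFDerivAt_const b x₀).sub A.hasFDerivAt).norm_sq
  have hcone : x - x₀ ∈ posTangentConeAt s x₀ :=
    mem_posTangentConeAt_of_segment_subset (by simpa using hs.segment_subset hx₀ hx)
  simpa [inner_sub_left] using
    hmin.localize.hasFDerivWithinAt_nonneg hderiv.hasFDerivWithinAt hcone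

theorem inner_adjoint_residual_le_of_isMinOn [InnerProductSpace ℝ E] [CompleteSpace E]
    [CompleteSpace F] {A : E →L[ℝ] F} {b : F} {s : Set E} (hs : Convex ℝ s) {x₀ x : E}
    (hmin : IsMinOn (fun x ↦ ‖b - A x‖ ^ 2) s x₀) (hx₀ : x₀ ∈ s) (hx : x ∈ s) :
    ⟪A.adjoint (b - A x₀), x⟫ ≤ ⟪A.adjoint (b - A x₀), x₀⟫ := by
  have h := inner_residual_apply_sub_nonpos_of_isMinOn hs hmin hx₀ hx
  rw [map_sub, inner_sub_right] at h
  simpa only [ContinuousLinearMap.adjoint_inner_left, sub_nonpos] using h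

end LeastSquares

section L1Ball

def l1Ball (ι : Type*) [Fintype ι] (τ : ℝ) : Set (EuclideanSpace ℝ ι) := {x | ∑ j, |x j| ≤ τ}

variable {ι : Type*} [Fintype ι]

theorem convex_l1Ball (τ : ℝ) : Convex ℝ (l1Ball ι τ) := by
  intro x hx y hy a b ha hb hab
  calc ∑ j, |(a • x + b • y) j| ≤ ∑ j, (a * |x j| + b * |y j|) := by
        refine sum_le_sum fun j _ ↦ (abs_add_le _ _).trans_eq ?_
        simp [abs_mul, abs_of_nonneg ha, abs_of_nonneg hb]
    _ = a * ∑ j, |x j| + b * ∑ j, |y j| := by rw [sum_add_distrib, mul_sum, mul_sum]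
    _ ≤ a * τ + b * τ := by gcongr <;> assumption
    _ = τ := by rw [← add_mul, hab, one_mul]

theorem real_inner_eq_sum_mul (c x : EuclideanSpace ℝ ι) : ⟪c, x⟫ = ∑ j, c j * x j := by
  simp [PiLp.inner_apply, mul_comm]

theorem inner_le_iSup_abs_mul_sum_abs (c x : EuclideanSpace ℝ ι) :
    ⟪c, x⟫ ≤ (⨆ j, |c j|) * ∑ j, |x j| := by
  rw [real_inner_eq_sum_mul, mul_sum]
  refine sum_le_sum fun j _ ↦ ?_
  calc c j * x j ≤ |c j| * |x j| := (le_abs_self _).trans_eq (abs_mul _ _)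
    _ ≤ (⨆ j, |c j|) * |x j| := by
      gcongr; exact le_ciSup (f := fun j ↦ |c j|) (Finite.bddAbove_range _) j

theorem exists_mem_l1Ball_inner_eq (c : EuclideanSpace ℝ ι) {τ : ℝ} (hτ : 0 ≤ τ) :
    ∃ x ∈ l1Ball ι τ, ⟪c, x⟫ = τ * ⨆ j, |c j| := by
  classical
  cases isEmpty_or_nonempty ι
  · exact ⟨0, by simp [l1Ball, hτ], by simp⟩
  obtain ⟨j₀, hj₀⟩ := Finite.exists_max fun j ↦ |c j|
  have hsup : ⨆ j, |c j| = |c j₀| :=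
    le_antisymm (ciSup_le hj₀) (le_ciSup (f := fun j ↦ |c j|) (Finite.bddAbove_range _) j₀)
  refine ⟨EuclideanSpace.single j₀ (τ * SignType.sign (c j₀)), ?_, ?_⟩
  · have hsign : |(SignType.sign (c j₀) : ℝ)| ≤ 1 := by cases SignType.sign (c j₀) <;> simp
    simpa [l1Ball, PiLp.single_apply, apply_ite, abs_mul, abs_of_nonneg hτ] using
      mul_le_of_le_one_right hτ hsign
  · rw [real_inner_comm, EuclideanSpace.inner_single_left, hsup]
    simp [mul_assoc, sign_mul_self]

theorem isGreatest_inner_l1Ball (c : EuclideanSpace ℝ ι) {τ : ℝ} (hτ : 0 ≤ τ) :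
    IsGreatest ((⟪c, ·⟫) '' l1Ball ι τ) (τ * ⨆ j, |c j|) := by
  obtain ⟨x, hx, hcx⟩ := exists_mem_l1Ball_inner_eq c hτ
  refine ⟨⟨x, hx, hcx⟩, Set.forall_mem_image.2 fun y hy ↦ ?_⟩
  calc ⟪c, y⟫ ≤ (⨆ j, |c j|) * ∑ j, |y j| := inner_le_iSup_abs_mul_sum_abs c y
    _ ≤ (⨆ j, |c j|) * τ :=
      mul_le_mul_of_nonneg_left hy (Real.iSup_nonneg fun j ↦ abs_nonneg _)
    _ = τ * ⨆ j, |c j| := mul_comm _ _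

end L1Ball

/-- If `x̄` minimizes `‖b − Ax‖²` over the ℓ¹ ball of radius `τ ≥ 0`, and
`r̄ = b − A x̄`, then `⟨Aᵀ r̄, x̄⟩ = τ · ‖Aᵀ r̄‖_∞`. -/
theorem lasso_optimality_inner_product (n m : ℕ)
    (A : EuclideanSpace ℝ (Fin n) →L[ℝ] EuclideanSpace ℝ (Fin m))
    (b : EuclideanSpace ℝ (Fin m)) (τ : ℝ) (hτ : 0 ≤ τ)
    (xb : EuclideanSpace ℝ (Fin n)) (hfeas : (∑ j, |xb j|) ≤ τ)
    (hmin : ∀ x : EuclideanSpace ℝ (Fin n),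
      (∑ j, |x j|) ≤ τ → ‖b - A xb‖ ^ 2 ≤ ‖b - A x‖ ^ 2)
    (rb : EuclideanSpace ℝ (Fin m)) (hrb : rb = b - A xb) :
    (inner ℝ ((ContinuousLinearMap.adjoint A) rb) xb : ℝ) =
      τ * ⨆ j, |(ContinuousLinearMap.adjoint A) rb j| := by
  subst hrb
  have hxb : xb ∈ l1Ball (Fin n) τ := hfeas
  have hmin' : IsMinOn (fun x ↦ ‖b - A x‖ ^ 2) (l1Ball (Fin n) τ) xb := isMinOn_iff.2 hmin
  have hmax : IsGreatest ((⟪A.adjoint (b - A xb), ·⟫) '' l1Ball (Fin n) τ)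
      ⟪A.adjoint (b - A xb), xb⟫ :=
    ⟨⟨xb, hxb, rfl⟩, Set.forall_mem_image.2 fun x hx ↦
      inner_adjoint_residual_le_of_isMinOn (convex_l1Ball (ι := Fin n) τ) hmin' hxb hx⟩
  exact hmax.unique (isGreatest_inner_l1Ball _ hτ)
end

section
/- Let A : ℝⁿ → ℝᵐ be a linear map, b ∈ ℝᵐ, and define the value function v(τ) = inf { ‖b − A x‖² : ‖x‖₁ ≤ τ } for τ ≥ 0. Let τ ≥ 0 and let x̄ be a global minimizer of x ↦ ‖b − A x‖² over {x : ‖x‖₁ ≤ τ}, with r̄ = b − A x̄. Then for every τ′ ≥ 0, v(τ′) ≥ v(τ) − 2 ‖Aᵀ r̄‖_∞ (τ′ − τ); that is, −2‖Aᵀ r̄‖_∞ is a subgradient of v at τ. -/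
/-!
Write `g = Aᵀ r̄` and `λ = ‖g‖_∞`. Expanding the square around `x̄` gives
`‖b − Ax‖² ≥ ‖r̄‖² − 2⟪g, x − x̄⟫` for every `x`, and Hölder bounds `⟪g, x⟫ ≤ λ τ'` on the
`τ'`-ball. The first-order optimality condition for the projection of `b` onto the convex set
`A (τ-ball)` says that `x̄` maximizes `⟪g, ·⟫` on the `τ`-ball, where the maximum is `λ τ`,
attained at a signed multiple of a coordinate vector; so `⟪g, x̄⟫ ≥ λ τ`. Combining,
`‖b − Ax‖² ≥ ‖r̄‖² − 2λ(τ' − τ)` for every `x` in the `τ'`-ball, while `v τ = ‖r̄‖²`.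
-/

open scoped RealInnerProductSpace

section LpDuality

variable {ι : Type*} [Fintype ι]

theorem convex_setOf_sum_abs_le (τ : ℝ) :
    Convex ℝ {x : EuclideanSpace ℝ ι | ∑ j, |x j| ≤ τ} := by
  intro x hx y hy a c ha hc hac
  calc ∑ j, |(a • x + c • y) j| ≤ ∑ j, (a * |x j| + c * |y j|) := by
        gcongr with j
        simpa [abs_mul, abs_of_nonneg ha, abs_of_nonneg hc] using abs_add_le (a * x j) (c * y j)
    _ = a * ∑ j, |x j| + c * ∑ j, |y j| := by
        rw [Finset.sum_add_distrib, Finset.mul_sum, Finset.mul_sum]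
    _ ≤ a * τ + c * τ := by gcongr; exacts [hx, hy]
    _ = τ := by rw [← add_mul, hac, one_mul]

theorem real_inner_le_iSup_abs_mul_sum_abs (g x : EuclideanSpace ℝ ι) :
    ⟪g, x⟫ ≤ (⨆ j, |g j|) * ∑ j, |x j| := by
  have hbdd : BddAbove (Set.range fun j => |g j|) := (Set.finite_range _).bddAbove
  rw [PiLp.inner_apply, Finset.mul_sum]
  gcongr with j
  calc ⟪g j, x j⟫ ≤ |g j| * |x j| := by
        simpa [abs_mul, mul_comm] using le_abs_self (x j * g j)
    _ ≤ (⨆ j, |g j|) * |x j| := by gcongr; exact le_ciSup hbdd j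

theorem exists_sum_abs_le_real_inner_eq (g : EuclideanSpace ℝ ι) {τ : ℝ} (hτ : 0 ≤ τ) :
    ∃ z : EuclideanSpace ℝ ι, ∑ j, |z j| ≤ τ ∧ ⟪g, z⟫ = (⨆ j, |g j|) * τ := by
  cases isEmpty_or_nonempty ι with
  | inl _ => exact ⟨0, by simpa using hτ, by simp⟩
  | inr _ =>
    classical
    obtain ⟨j₀, hj₀⟩ := Finite.exists_max fun j => |g j|
    have hsup : (⨆ j, |g j|) = |g j₀| :=
      le_antisymm (ciSup_le hj₀) (le_ciSup (f := fun j => |g j|) (Set.finite_range _).bddAbove j₀)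
    have hsign : |(SignType.sign (g j₀) : ℝ)| ≤ 1 := by
      rcases lt_trichotomy (g j₀) 0 with h | h | h <;> simp [h]
    refine ⟨EuclideanSpace.single j₀ (SignType.sign (g j₀) * τ), ?_, ?_⟩
    · simp only [PiLp.single_apply, apply_ite, abs_zero, Finset.sum_ite_eq', Finset.mem_univ,
        if_true, abs_mul, abs_of_nonneg hτ]
      exact mul_le_of_le_one_left hτ hsign
    · rw [EuclideanSpace.inner_single_right, hsup, ← self_mul_sign]
      simp only [conj_trivial]
      ring

end LpDuality

section LeastSquares

variable {E F : Type*} [NormedAddCommGroup E] [InnerProductSpace ℝ E] [CompleteSpace E]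
  [NormedAddCommGroup F] [InnerProductSpace ℝ F] [CompleteSpace F]

theorem norm_sub_apply_sq_ge (A : E →L[ℝ] F) (b : F) (x₀ x : E) :
    ‖b - A x₀‖ ^ 2 - 2 * ⟪ContinuousLinearMap.adjoint A (b - A x₀), x - x₀⟫ ≤ ‖b - A x‖ ^ 2 := by
  have hsplit : b - A x = (b - A x₀) - A (x - x₀) := by rw [map_sub]; abel
  rw [hsplit, norm_sub_sq_real (b - A x₀), ContinuousLinearMap.adjoint_inner_left]
  nlinarith [sq_nonneg ‖A (x - x₀)‖]

theorem real_inner_adjoint_le_of_isMinOn (A : E →L[ℝ] F) (b : F) {S : Set E} (hS : Convex ℝ S)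
    {x₀ : E} (hx₀ : x₀ ∈ S) (hmin : IsMinOn (fun x => ‖b - A x‖) S x₀) {z : E} (hz : z ∈ S) :
    ⟪ContinuousLinearMap.adjoint A (b - A x₀), z⟫ ≤
      ⟪ContinuousLinearMap.adjoint A (b - A x₀), x₀⟫ := by
  have hK : Convex ℝ (A '' S) := hS.linear_image A.toLinearMap
  have hproj : ‖b - A x₀‖ = ⨅ w : A '' S, ‖b - w‖ := by
    have : Nonempty (A '' S) := ⟨⟨A x₀, x₀, hx₀, rfl⟩⟩
    refine le_antisymm (le_ciInf ?_)
      (ciInf_le (f := fun w : A '' S => ‖b - w‖) ⟨0, ?_⟩ ⟨A x₀, x₀, hx₀, rfl⟩)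
    · rintro ⟨_, x, hx, rfl⟩
      exact hmin hx
    · rintro _ ⟨w, rfl⟩
      exact norm_nonneg _
  have hobtuse :=
    (norm_eq_iInf_iff_real_inner_le_zero hK ⟨x₀, hx₀, rfl⟩).1 hproj (A z) ⟨z, hz, rfl⟩
  rw [← map_sub, ← ContinuousLinearMap.adjoint_inner_left, inner_sub_right] at hobtuse
  linarith

end LeastSquares

theorem lasso_value_function_subgradient_general (n m : ℕ)
    (A : EuclideanSpace ℝ (Fin n) →L[ℝ] EuclideanSpace ℝ (Fin m))
    (b : EuclideanSpace ℝ (Fin m))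
    (v : ℝ → ℝ)
    (hv : ∀ t, v t = sInf {r : ℝ | ∃ x : EuclideanSpace ℝ (Fin n),
      (∑ j, |x j|) ≤ t ∧ r = ‖b - A x‖ ^ 2})
    (τ : ℝ)
    (xb : EuclideanSpace ℝ (Fin n)) (hfeas : (∑ j, |xb j|) ≤ τ)
    (hmin : ∀ x : EuclideanSpace ℝ (Fin n),
      (∑ j, |x j|) ≤ τ → ‖b - A xb‖ ^ 2 ≤ ‖b - A x‖ ^ 2)
    (rb : EuclideanSpace ℝ (Fin m)) (hrb : rb = b - A xb) :
    ∀ τ' : ℝ, 0 ≤ τ' →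
      v τ' ≥ v τ - 2 * (⨆ j, |(ContinuousLinearMap.adjoint A) rb j|) * (τ' - τ) := by
  intro τ' hτ'
  subst hrb
  set g := ContinuousLinearMap.adjoint A (b - A xb)
  have hτ : 0 ≤ τ := (Finset.sum_nonneg fun j _ => abs_nonneg (xb j)).trans hfeas
  have hopt : (⨆ j, |g j|) * τ ≤ ⟪g, xb⟫ := by
    obtain ⟨z, hz, hgz⟩ := exists_sum_abs_le_real_inner_eq g hτ
    have hmin' : IsMinOn (fun x => ‖b - A x‖) {x | ∑ j, |x j| ≤ τ} xb := fun x hx =>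
      (pow_le_pow_iff_left₀ (norm_nonneg _) (norm_nonneg _) two_ne_zero).1 (hmin x hx)
    rw [← hgz]
    exact real_inner_adjoint_le_of_isMinOn A b (convex_setOf_sum_abs_le τ) hfeas hmin' hz
  have hvτ : v τ = ‖b - A xb‖ ^ 2 := by
    rw [hv]
    exact IsLeast.csInf_eq ⟨⟨xb, hfeas, rfl⟩, by rintro _ ⟨x, hx, rfl⟩; exact hmin x hx⟩
  rw [hv, hvτ, ge_iff_le]
  refine le_csInf ⟨_, 0, by simpa using hτ', rfl⟩ ?_
  rintro _ ⟨x, hx, rfl⟩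
  have hgx : ⟪g, x⟫ ≤ (⨆ j, |g j|) * τ' :=
    (real_inner_le_iSup_abs_mul_sum_abs g x).trans
      (mul_le_mul_of_nonneg_left hx (Real.iSup_nonneg fun j => abs_nonneg (g j)))
  have hexpand := norm_sub_apply_sq_ge A b xb x
  rw [inner_sub_right] at hexpand
  linarith

/-- Subgradient of the LASSO value function `v τ = inf { ‖b − Ax‖² : ‖x‖₁ ≤ τ }`:
if `x̄` minimizes `‖b − Ax‖²` over the ℓ¹ ball of radius `τ ≥ 0` and `r̄ = b − A x̄`,
then for every `τ' ≥ 0`, `v τ' ≥ v τ − 2 ‖Aᵀ r̄‖_∞ (τ' − τ)`. -/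
theorem lasso_value_function_subgradient (n m : ℕ)
    (A : EuclideanSpace ℝ (Fin n) →L[ℝ] EuclideanSpace ℝ (Fin m))
    (b : EuclideanSpace ℝ (Fin m))
    (v : ℝ → ℝ)
    (hv : ∀ t, v t = sInf {r : ℝ | ∃ x : EuclideanSpace ℝ (Fin n),
      (∑ j, |x j|) ≤ t ∧ r = ‖b - A x‖ ^ 2})
    (τ : ℝ) (hτ : 0 ≤ τ)
    (xb : EuclideanSpace ℝ (Fin n)) (hfeas : (∑ j, |xb j|) ≤ τ)
    (hmin : ∀ x : EuclideanSpace ℝ (Fin n),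
      (∑ j, |x j|) ≤ τ → ‖b - A xb‖ ^ 2 ≤ ‖b - A x‖ ^ 2)
    (rb : EuclideanSpace ℝ (Fin m)) (hrb : rb = b - A xb) :
    ∀ τ' : ℝ, 0 ≤ τ' →
      v τ' ≥ v τ - 2 * (⨆ j, |(ContinuousLinearMap.adjoint A) rb j|) * (τ' - τ) :=
  lasso_value_function_subgradient_general n m A b v hv τ xb hfeas hmin rb hrb
end
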